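/- There exists a set A ⊆ ℕ such that ℕ \ A is infinite and the sequence (r(3,A,n))_{n≥0} is strictly increasing: r(3,A,n) < r(3,A,n+1) for all n ≥ 0. (This disproves Dombi's 2002 conjecture that no co-infinite set A has (r(3,A,n)) eventually increasing.) -/

import Mathlib

/-- `r k A n` is the number of `k`-tuples `(c₁, …, c_k)` of elements of `A`
with `c₁ + ⋯ + c_k = n`. -/
noncomputable def r (k : ℕ) (A : Set ℕ) (n : ℕ) : ℕ :=
  Set.ncard {c : Fin k → ℕ | (∀ i, c i ∈ A) ∧ ∑ i, c i = n}

/-!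
Let `f = ∑_{a ∈ A} Xᵃ`, `g = ∑_{b ∉ A} Xᵇ` and `u = ∑ Xⁿ = (1 - X)⁻¹`, so that `f = u - g` and
`r(k, A, n)` is the `n`-th coefficient of `fᵏ`. Expanding,
`(1 - X) f³ = u² - 3 g u + 3 g² - (1 - X) g³`. Let `E` be the number of non-elements of `A` up to
`n + 1`; the coefficient `r(3, ℕ \ A, n + 1)` of `g³` is at most `E²`, since such a triple is
determined by its last two entries. Comparing coefficients of `X ^ (n + 1)` therefore gives
`r(3, A, n + 1) - r(3, A, n) ≥ (n + 2) - 3 E - E²`. For `A = ℕ \ {4, 16, 64, …}` we have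
`E ≤ log₄ (n + 1)`, and `E² + 3 E ≤ 4 ^ E ≤ n + 1`.
-/

open PowerSeries Finset

theorem PowerSeries.coeff_pow_eq_sum_finAntidiagonal {R : Type*} [CommSemiring R]
    (φ : R⟦X⟧) (k n : ℕ) :
    coeff n (φ ^ k) = ∑ c ∈ finAntidiagonal k n, ∏ i, coeff (c i) φ := by
  induction k generalizing n with
  | zero =>
    rw [pow_zero, coeff_one]
    by_cases hn : n = 0 <;> simp [finAntidiagonal, finAntidiagonal.aux, hn]
  | succ k ih =>
    rw [pow_succ', coeff_mul, finAntidiagonal, finAntidiagonal.aux, sum_disjiUnion]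
    refine sum_congr rfl fun p _ => ?_
    simp [ih, Fin.prod_univ_succ, mul_sum, finAntidiagonal]

noncomputable def indicatorSeries (R : Type*) [Semiring R] (A : Set ℕ) : R⟦X⟧ :=
  mk (A.indicator 1)

theorem coeff_indicatorSeries_pow {R : Type*} [CommSemiring R] (A : Set ℕ) (k n : ℕ) :
    coeff n (indicatorSeries R A ^ k) = r k A n := by
  classical
  have hr : {c : Fin k → ℕ | (∀ i, c i ∈ A) ∧ ∑ i, c i = n} =
      ↑{c ∈ finAntidiagonal k n | ∀ i, c i ∈ A} := by
    ext c
    simp [and_comm]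
  rw [coeff_pow_eq_sum_finAntidiagonal, r, hr, Set.ncard_coe_finset, card_filter, Nat.cast_sum]
  refine sum_congr rfl fun c _ => ?_
  simp [indicatorSeries, Set.indicator_apply, prod_boole]

theorem Set.ncard_univ_pi_const {α : Type*} (S : Set α) (k : ℕ) :
    (Set.univ.pi fun _ : Fin k => S).ncard = S.ncard ^ k := by
  rw [← Nat.card_coe_set_eq, Nat.card_congr (Equiv.Set.univPi _), Nat.card_pi,
    prod_const, card_univ, Fintype.card_fin, Nat.card_coe_set_eq]

theorem r_succ_le_ncard_pow (B : Set ℕ) (k m : ℕ) :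
    r (k + 1) B m ≤ (B ∩ Set.Iic m).ncard ^ k := by
  rw [← Set.ncard_univ_pi_const]
  refine Set.ncard_le_ncard_of_injOn Fin.tail ?_ ?_
    (Set.Finite.pi fun _ => (Set.finite_Iic m).inter_of_right B)
  · rintro c ⟨hB, hsum⟩ i -
    refine ⟨hB _, ?_⟩
    rw [Set.mem_Iic, ← hsum]
    exact single_le_sum (f := c) (fun _ _ => Nat.zero_le _) (mem_univ _)
  · rintro c ⟨-, hc⟩ d ⟨-, hd⟩ htail
    have htail_sum : ∑ i : Fin k, c i.succ = ∑ i : Fin k, d i.succ :=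
      congrArg (fun f : Fin k → ℕ => ∑ i, f i) htail
    rw [Fin.sum_univ_succ] at hc hd
    rw [← Fin.cons_self_tail c, ← Fin.cons_self_tail d, htail, show c 0 = d 0 by omega]

theorem coeff_indicatorSeries_mul_mk_one {R : Type*} [CommSemiring R] (B : Set ℕ) (m : ℕ) :
    coeff m (indicatorSeries R B * (PowerSeries.mk 1 : R⟦X⟧)) = (B ∩ Set.Iic m).ncard := by
  classical
  have hB : B ∩ Set.Iic m = ↑{i ∈ range (m + 1) | i ∈ B} := by
    ext i
    simp [and_comm]
  rw [coeff_mul, Nat.sum_antidiagonal_eq_sum_range_succ_mk, hB,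
    Set.ncard_coe_finset, card_filter, Nat.cast_sum]
  simp [indicatorSeries, Set.indicator_apply]

theorem PowerSeries.coeff_succ_one_sub_X_mul {R : Type*} [CommRing R] (φ : R⟦X⟧) (n : ℕ) :
    coeff (n + 1) ((1 - X) * φ) = coeff (n + 1) φ - coeff n φ := by
  rw [sub_mul, one_mul, map_sub, coeff_succ_X_mul]

theorem coeff_mk_one_sq {R : Type*} [CommRing R] (m : ℕ) :
    coeff m ((PowerSeries.mk 1 : R⟦X⟧) ^ 2) = (m + 1 : R) := by
  rw [mk_one_pow_eq_mk_choose_add, coeff_mk]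
  simp [add_comm]

theorem le_r_three_succ_sub_r_three (A : Set ℕ) (n : ℕ) :
    (n : ℤ) + 2 - 3 * (Aᶜ ∩ Set.Iic (n + 1)).ncard - (Aᶜ ∩ Set.Iic (n + 1)).ncard ^ 2 ≤
      (r 3 A (n + 1) : ℤ) - r 3 A n := by
  set u : ℤ⟦X⟧ := PowerSeries.mk 1
  set g := indicatorSeries ℤ Aᶜ
  have hA : indicatorSeries ℤ A = u - g := by
    ext i
    simp [u, g, indicatorSeries, Set.indicator_compl]
  have key : (1 - X) * indicatorSeries ℤ A ^ 3 =
      u ^ 2 - 3 • (g * u) + 3 • g ^ 2 - (1 - X) * g ^ 3 := by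
    rw [hA]
    linear_combination (u ^ 2 - 3 * u * g + 3 * g ^ 2) * mk_one_mul_one_sub_eq_one ℤ
  have hcoeff := congrArg (coeff (n + 1)) key
  simp only [u, g, map_sub, map_add, map_nsmul, coeff_succ_one_sub_X_mul,
    coeff_indicatorSeries_pow, coeff_mk_one_sq, coeff_indicatorSeries_mul_mk_one] at hcoeff
  have hcube : (r 3 Aᶜ (n + 1) : ℤ) ≤ (Aᶜ ∩ Set.Iic (n + 1)).ncard ^ 2 := by
    exact_mod_cast r_succ_le_ncard_pow Aᶜ 2 (n + 1)
  push_cast [nsmul_eq_mul] at hcoeff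
  linarith [(r 2 Aᶜ (n + 1)).cast_nonneg (α := ℤ), (r 3 Aᶜ n).cast_nonneg (α := ℤ)]

theorem r_three_lt_r_three_succ (A : Set ℕ) (n : ℕ)
    (h : (Aᶜ ∩ Set.Iic (n + 1)).ncard ^ 2 + 3 * (Aᶜ ∩ Set.Iic (n + 1)).ncard ≤ n + 1) :
    r 3 A n < r 3 A (n + 1) := by
  have hΔ := le_r_three_succ_sub_r_three A n
  zify at h ⊢
  linarith

theorem ncard_range_four_pow_succ_inter_Iic_le_log (m : ℕ) :
    (Set.range (fun k => 4 ^ (k + 1)) ∩ Set.Iic m).ncard ≤ Nat.log 4 m := by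
  calc (Set.range (fun k => 4 ^ (k + 1)) ∩ Set.Iic m).ncard
      ≤ ((range (Nat.log 4 m)).image fun k => 4 ^ (k + 1)).card := by
        rw [← Set.ncard_coe_finset]
        refine Set.ncard_le_ncard ?_ (Finset.finite_toSet _)
        rintro _ ⟨⟨k, rfl⟩, hk⟩
        simpa using Nat.le_log_of_pow_le (by norm_num) hk
    _ ≤ Nat.log 4 m := card_image_le.trans (card_range _).le

theorem sq_add_three_mul_le_four_pow (L : ℕ) : L ^ 2 + 3 * L ≤ 4 ^ L := by
  induction L with
  | zero => norm_num
  | succ L ih =>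
    have hL := Nat.lt_pow_self (n := L) (by norm_num : 1 < 4)
    rw [pow_succ 4 L]
    nlinarith

theorem stmt_2 :
    ∃ A : Set ℕ, (Set.univ \ A).Infinite ∧ ∀ n : ℕ, r 3 A n < r 3 A (n + 1) := by
  refine ⟨(Set.range fun k => 4 ^ (k + 1))ᶜ, ?_, fun n => r_three_lt_r_three_succ _ n ?_⟩
  · rw [Set.sdiff_compl, Set.univ_inter]
    exact Set.infinite_range_of_injective fun a b h =>
      Nat.succ_injective (Nat.pow_right_injective (by norm_num) h)
  · have hE := ncard_range_four_pow_succ_inter_Iic_le_log (n + 1)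
    rw [compl_compl]
    calc _ ≤ Nat.log 4 (n + 1) ^ 2 + 3 * Nat.log 4 (n + 1) := by gcongr
      _ ≤ 4 ^ Nat.log 4 (n + 1) := sq_add_three_mul_le_four_pow _
      _ ≤ n + 1 := Nat.pow_log_le_self 4 n.succ_ne_zero
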